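/- arXiv:1510.08999 — 3 statements merged into one kernel-verified Lean document; each statement's English description precedes it below -/
import Mathlib

section
/- Let λ > 1 and δ ∈ (0,1) be real numbers and n a positive integer. Let (T_k)_{k≥1} be i.i.d. random variables taking values in the positive integers, with E[λ^{2T₁}] < ∞ and E[λ^{2T₁}] · δ^n < 1. Define S₀ = 0, S_k = T₁ + ⋯ + T_k, and for each integer t ≥ 1 let K_t = #{k ≥ 1 : S_k ≤ t} be the number of completed rounds by time t. Then Σ_{t=1}^∞ E[λ^{2t} δ^{n K_t}] < ∞; in particular limₜ→∞ E[λ^{2t} δ^{n K_t}] = 0. -/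
open MeasureTheory ProbabilityTheory Filter Finset

/-!
Write `S_k` for the completion time of round `k` and `m = E[x^{T₁}]`, `x = λ²`, `q = δⁿ`.
Every time `t` with `K_t = k` satisfies `t < S_{k+1}`, so grouping the times by the value of
`K_t` bounds `∑_t x^t q^{K_t}` pathwise by `x/(x-1) · ∑_k q^k x^{S_{k+1}}`. By independence
`E[x^{S_{k+1}}] = m^{k+1}`, so the expected bound is a geometric series of ratio `m q < 1`.
-/

def completedRounds (s : ℕ → ℕ) (t : ℕ) : ℕ := #{k ∈ Icc 1 t | s k ≤ t}

lemma completedRounds_le (s : ℕ → ℕ) (t : ℕ) : completedRounds s t ≤ t :=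
  (card_filter_le _ _).trans (by simp)

lemma lt_completedRounds_succ {s : ℕ → ℕ} (hs : StrictMono s) (t : ℕ) :
    t < s (completedRounds s t + 1) := by
  by_contra! h
  have hsub : Icc 1 (completedRounds s t + 1) ⊆ {k ∈ Icc 1 t | s k ≤ t} := by
    intro j hj
    rw [mem_Icc] at hj
    have hsj : s j ≤ t := (hs.monotone hj.2).trans h
    simpa [hj.1, hsj] using (hs.id_le j).trans hsj
  simpa [completedRounds] using card_le_card hsub

lemma sum_mul_comp_le_sum_mul_sum {R : Type*} [CommSemiring R] [PartialOrder R] [IsOrderedRing R]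
    {a b : ℕ → R} (ha : ∀ t, 0 ≤ a t) (hb : ∀ k, 0 ≤ b k) {κ σ : ℕ → ℕ} {N M : ℕ}
    (hκ : ∀ t < N, κ t < M) (hσ : ∀ t < N, t < σ (κ t)) :
    ∑ t ∈ range N, a t * b (κ t) ≤ ∑ k ∈ range M, b k * ∑ t ∈ range (σ k), a t := by
  rw [← sum_fiberwise_of_maps_to (g := κ) (t := range M) (by simpa using hκ)]
  refine sum_le_sum fun k _ => ?_
  have hfiber : {t ∈ range N | κ t = k} ⊆ range (σ k) := fun t ht => by
    obtain ⟨htN, rfl⟩ := mem_filter.1 ht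
    exact mem_range.2 (hσ t (mem_range.1 htN))
  calc ∑ t ∈ range N with κ t = k, a t * b (κ t)
      = b k * ∑ t ∈ range N with κ t = k, a t := by
        rw [mul_sum]
        exact sum_congr rfl fun t ht => by rw [(mem_filter.1 ht).2, mul_comm]
    _ ≤ b k * ∑ t ∈ range (σ k), a t :=
        mul_le_mul_of_nonneg_left (sum_le_sum_of_subset_of_nonneg hfiber fun t _ _ => ha t) (hb k)

lemma sum_range_pow_succ_le {x : ℝ} (hx : 1 < x) (s : ℕ) :
    ∑ t ∈ range s, x ^ (t + 1) ≤ x / (x - 1) * x ^ s := by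
  have hgeom := geom_sum_mul x s
  simp_rw [pow_succ, ← sum_mul]
  rw [div_mul_eq_mul_div, le_div_iff₀ (sub_pos.2 hx)]
  nlinarith [pow_pos (zero_lt_one.trans hx) s]

lemma sum_pow_mul_pow_completedRounds_le {x q : ℝ} (hx : 1 < x) (hq : 0 ≤ q) {s : ℕ → ℕ}
    (hs : StrictMono s) (N : ℕ) :
    ∑ t ∈ range N, x ^ (t + 1) * q ^ completedRounds s (t + 1) ≤
      x / (x - 1) * ∑ k ∈ range (N + 1), q ^ k * x ^ s (k + 1) := by
  have hx0 : 0 ≤ x := zero_le_one.trans hx.le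
  calc ∑ t ∈ range N, x ^ (t + 1) * q ^ completedRounds s (t + 1)
      ≤ ∑ k ∈ range (N + 1), q ^ k * ∑ t ∈ range (s (k + 1)), x ^ (t + 1) :=
        sum_mul_comp_le_sum_mul_sum (fun t => pow_nonneg hx0 _) (fun k => pow_nonneg hq k)
          (fun t _ => by have := completedRounds_le s (t + 1); omega)
          (fun t _ => by have := lt_completedRounds_succ hs (t + 1); omega)
    _ ≤ ∑ k ∈ range (N + 1), q ^ k * (x / (x - 1) * x ^ s (k + 1)) := by
        gcongr with k
        exact sum_range_pow_succ_le hx _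
    _ = x / (x - 1) * ∑ k ∈ range (N + 1), q ^ k * x ^ s (k + 1) := by
        rw [mul_sum]
        exact sum_congr rfl fun k _ => mul_left_comm _ _ _

lemma strictMono_sum_range {T : ℕ → ℕ} (hT : ∀ j, 1 ≤ T j) :
    StrictMono fun k => ∑ j ∈ range k, T j :=
  strictMono_nat_of_lt_succ fun k => by rw [sum_range_succ]; have := hT k; omega

section Probability

variable {Ω : Type*} [MeasurableSpace Ω] {P : Measure Ω}

lemma measurable_completedRounds {s : ℕ → Ω → ℕ} (hs : ∀ k, Measurable (s k)) (t : ℕ) :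
    Measurable fun ω => completedRounds (s · ω) t := by
  simp only [completedRounds, card_filter]
  exact Finset.measurable_sum _ fun k _ =>
    Measurable.ite (measurableSet_le (hs k) measurable_const) measurable_const measurable_const

lemma integrable_pow_mul_pow_completedRounds [IsFiniteMeasure P] {s : ℕ → Ω → ℕ}
    (hs : ∀ k, Measurable (s k)) (x : ℝ) {q : ℝ} (hq : 0 ≤ q) (hq1 : q ≤ 1) (t : ℕ) :
    Integrable (fun ω => x ^ t * q ^ completedRounds (s · ω) t) P :=
  (integrable_const (‖x‖ ^ t)).mono'
    ((measurable_from_nat.comp (measurable_completedRounds hs t)).const_mul _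
      |>.aestronglyMeasurable)
    (ae_of_all _ fun ω => by
      rw [norm_mul, norm_pow, norm_pow, Real.norm_of_nonneg hq]
      exact mul_le_of_le_one_right (by positivity) (pow_le_one₀ hq hq1))

lemma ProbabilityTheory.iIndepFun.integrable_prod_range {Y : ℕ → Ω → ℝ} (hY : iIndepFun Y P)
    (hmeas : ∀ j, Measurable (Y j)) (hint : ∀ j, Integrable (Y j) P) (k : ℕ) :
    Integrable (∏ j ∈ range k, Y j) P := by
  have := hY.isProbabilityMeasure
  induction k with
  | zero => exact integrable_const 1
  | succ k ih =>
    rw [prod_range_succ]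
    exact (hY.indepFun_prod_range_succ hmeas k).integrable_mul ih (hint k)

lemma ProbabilityTheory.iIndepFun.integral_prod_range {Y : ℕ → Ω → ℝ} (hY : iIndepFun Y P)
    (hmeas : ∀ j, Measurable (Y j)) (k : ℕ) :
    P[∏ j ∈ range k, Y j] = ∏ j ∈ range k, P[Y j] := by
  have := hY.isProbabilityMeasure
  induction k with
  | zero => simp
  | succ k ih =>
    rw [prod_range_succ, prod_range_succ, ← ih]
    exact (hY.indepFun_prod_range_succ hmeas k).integral_mul_eq_mul_integral
      (Finset.aestronglyMeasurable_prod _ fun j _ => (hmeas j).aestronglyMeasurable)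
      (hmeas k).aestronglyMeasurable

lemma integrable_pow_sum_range {T : ℕ → Ω → ℕ} (hindep : iIndepFun T P)
    (hmeas : ∀ j, Measurable (T j)) (hident : ∀ j, IdentDistrib (T j) (T 0) P P) {x : ℝ}
    (hint : Integrable (fun ω => x ^ T 0 ω) P) (k : ℕ) :
    Integrable (fun ω => x ^ ∑ j ∈ range k, T j ω) P := by
  have hY := hindep.comp (fun _ n => x ^ n) fun _ => measurable_from_nat
  convert hY.integrable_prod_range (fun j => measurable_from_nat.comp (hmeas j))
    (fun j => ((hident j).comp measurable_from_nat).integrable_iff.2 hint) k using 1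
  ext ω
  simp only [prod_apply, Function.comp_apply, prod_pow_eq_pow_sum]

lemma integral_pow_sum_range {T : ℕ → Ω → ℕ} (hindep : iIndepFun T P)
    (hmeas : ∀ j, Measurable (T j)) (hident : ∀ j, IdentDistrib (T j) (T 0) P P) (x : ℝ)
    (k : ℕ) :
    ∫ ω, x ^ ∑ j ∈ range k, T j ω ∂P = (∫ ω, x ^ T 0 ω ∂P) ^ k := by
  have hY := hindep.comp (fun _ n => x ^ n) fun _ => measurable_from_nat
  have h := hY.integral_prod_range (fun j => measurable_from_nat.comp (hmeas j)) k
  simp only [prod_apply, Function.comp_apply, prod_pow_eq_pow_sum] at h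
  have hT0 : ∀ j, ∫ ω, x ^ T j ω ∂P = ∫ ω, x ^ T 0 ω ∂P := fun j =>
    ((hident j).comp (measurable_from_nat (f := fun n => x ^ n))).integral_eq
  rw [h, prod_congr rfl fun j _ => hT0 j, prod_const, card_range]

theorem summable_integral_pow_mul_pow_completedRounds {T : ℕ → Ω → ℕ}
    (hmeas : ∀ j, Measurable (T j)) (hpos : ∀ j ω, 1 ≤ T j ω) (hindep : iIndepFun T P)
    (hident : ∀ j, IdentDistrib (T j) (T 0) P P) {x q : ℝ} (hx : 1 < x) (hq : 0 ≤ q)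
    (hint : Integrable (fun ω => x ^ T 0 ω) P) (hcontract : (∫ ω, x ^ T 0 ω ∂P) * q < 1) :
    Summable fun t => ∫ ω, x ^ (t + 1) *
      q ^ completedRounds (fun k => ∑ j ∈ range k, T j ω) (t + 1) ∂P := by
  have := hindep.isProbabilityMeasure
  set m := ∫ ω, x ^ T 0 ω ∂P
  have hm1 : 1 ≤ m := by
    simpa using integral_mono (integrable_const 1) hint fun ω => one_le_pow₀ hx.le
  have hq1 : q ≤ 1 := by nlinarith
  have hSmeas : ∀ k, Measurable fun ω => ∑ j ∈ range k, T j ω := fun k =>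
    Finset.measurable_sum _ fun j _ => hmeas j
  have hterm_int := integrable_pow_mul_pow_completedRounds (P := P) hSmeas x hq hq1
  have hbound_int : ∀ N, Integrable
      (fun ω => ∑ k ∈ range N, q ^ k * x ^ ∑ j ∈ range (k + 1), T j ω) P := fun N =>
    integrable_finsetSum _ fun k _ =>
      (integrable_pow_sum_range hindep hmeas hident hint (k + 1)).const_mul _
  refine summable_of_sum_range_le (c := x / (x - 1) * m * (1 - m * q)⁻¹)
    (fun t => integral_nonneg fun ω => by positivity) fun N => ?_
  calc ∑ t ∈ range N, ∫ ω, x ^ (t + 1) *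
        q ^ completedRounds (fun k => ∑ j ∈ range k, T j ω) (t + 1) ∂P
      = ∫ ω, ∑ t ∈ range N, x ^ (t + 1) *
        q ^ completedRounds (fun k => ∑ j ∈ range k, T j ω) (t + 1) ∂P :=
        (integral_finsetSum _ fun t _ => hterm_int (t + 1)).symm
    _ ≤ ∫ ω, x / (x - 1) * ∑ k ∈ range (N + 1), q ^ k * x ^ ∑ j ∈ range (k + 1), T j ω ∂P :=
        integral_mono (integrable_finsetSum _ fun t _ => hterm_int (t + 1))
          ((hbound_int (N + 1)).const_mul _) fun ω =>
          sum_pow_mul_pow_completedRounds_le hx hq (strictMono_sum_range (hpos · ω)) N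
    _ = x / (x - 1) * m * ∑ k ∈ range (N + 1), (m * q) ^ k := by
        rw [integral_const_mul, integral_finsetSum _ fun k _ =>
          (integrable_pow_sum_range hindep hmeas hident hint (k + 1)).const_mul _]
        simp_rw [integral_const_mul, integral_pow_sum_range hindep hmeas hident, mul_sum]
        exact sum_congr rfl fun k _ => by ring
    _ ≤ x / (x - 1) * m * (1 - m * q)⁻¹ := by
        gcongr
        exact sum_le_hasSum _ (fun k _ => by positivity)
            (hasSum_geometric_of_lt_one (by positivity) hcontract)

end Probability

theorem stmt5_general (lam δ : ℝ) (hlam : 1 < lam) (hδ : δ ∈ Set.Ioo (0 : ℝ) 1)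
    (n : ℕ)
    {Ω : Type*} [MeasurableSpace Ω] (P : Measure Ω)
    (T : ℕ → Ω → ℕ) (hmeas : ∀ k, Measurable (T k)) (hpos : ∀ k ω, 1 ≤ T k ω)
    (hindep : iIndepFun T P)
    (hident : ∀ k, Measure.map (T k) P = Measure.map (T 0) P)
    (hint : Integrable (fun ω => lam ^ (2 * T 0 ω)) P)
    (hcontract : (∫ ω, lam ^ (2 * T 0 ω) ∂P) * δ ^ n < 1)
    (S : ℕ → Ω → ℕ) (hS : ∀ k ω, S k ω = ∑ j ∈ Finset.range k, T j ω)
    (K : ℕ → Ω → ℕ)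
    (hK : ∀ t ω, K t ω = ((Finset.Icc 1 t).filter fun k => S k ω ≤ t).card) :
    Summable (fun t : ℕ => ∫ ω, lam ^ (2 * (t + 1)) * δ ^ (n * K (t + 1) ω) ∂P) ∧
    Tendsto (fun t : ℕ => ∫ ω, lam ^ (2 * t) * δ ^ (n * K t ω) ∂P) atTop (nhds 0) := by
  have hK_eq : ∀ t ω, K t ω = completedRounds (fun k => ∑ j ∈ range k, T j ω) t := by
    simp only [hK, hS, completedRounds, implies_true]
  have hsum : Summable fun t : ℕ =>
      ∫ ω, lam ^ (2 * (t + 1)) * δ ^ (n * K (t + 1) ω) ∂P := by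
    simp only [hK_eq, pow_mul]
    simp only [pow_mul] at hint hcontract
    exact summable_integral_pow_mul_pow_completedRounds hmeas hpos hindep
      (fun k => ⟨(hmeas k).aemeasurable, (hmeas 0).aemeasurable, hident k⟩)
      (one_lt_pow₀ hlam two_ne_zero) (pow_nonneg hδ.1.le n) hint hcontract
  exact ⟨hsum, (tendsto_add_atTop_iff_nat 1).mp hsum.tendsto_atTop_zero⟩

/-- Key estimate for the adaptive TDMA scheduler: if `λ > 1`, `δ ∈ (0,1)`, `n ≥ 1`, the
round durations `(T_k)` are i.i.d. positive-integer random variables with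
`E[λ^{2T₁}] < ∞` and `E[λ^{2T₁}] δ^n < 1`, and `K_t` counts the rounds completed by
time `t`, then `∑_{t=1}^∞ E[λ^{2t} δ^{n K_t}] < ∞`; in particular
`E[λ^{2t} δ^{n K_t}] → 0`. -/
theorem stmt5 (lam δ : ℝ) (hlam : 1 < lam) (hδ : δ ∈ Set.Ioo (0 : ℝ) 1)
    (n : ℕ) (hn : 0 < n)
    {Ω : Type*} [MeasurableSpace Ω] (P : Measure Ω) [IsProbabilityMeasure P]
    (T : ℕ → Ω → ℕ) (hmeas : ∀ k, Measurable (T k)) (hpos : ∀ k ω, 1 ≤ T k ω)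
    (hindep : iIndepFun T P)
    (hident : ∀ k, Measure.map (T k) P = Measure.map (T 0) P)
    (hint : Integrable (fun ω => lam ^ (2 * T 0 ω)) P)
    (hcontract : (∫ ω, lam ^ (2 * T 0 ω) ∂P) * δ ^ n < 1)
    (S : ℕ → Ω → ℕ) (hS : ∀ k ω, S k ω = ∑ j ∈ Finset.range k, T j ω)
    (K : ℕ → Ω → ℕ)
    (hK : ∀ t ω, K t ω = ((Finset.Icc 1 t).filter fun k => S k ω ≤ t).card) :
    Summable (fun t : ℕ => ∫ ω, lam ^ (2 * (t + 1)) * δ ^ (n * K (t + 1) ω) ∂P) ∧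
    Tendsto (fun t : ℕ => ∫ ω, lam ^ (2 * t) * δ ^ (n * K t ω) ∂P) atTop (nhds 0) :=
  stmt5_general lam δ hlam hδ n P T hmeas hpos hindep hident hint hcontract S hS K hK
end

section
/- Let ε ∈ (0,1), δ ∈ (0,1), and let λ₁,…,λ_N be real numbers with λ_i ≥ 1 for each i. Suppose there exist real numbers α₁,…,α_N > 0 with Σ_{i=1}^N α_i = 1 such that λ_i² (ε + (1−ε) δ^{α_i}) < 1 for every i. Then ελ_i² < 1 for every i, and there exist positive integers n₁,…,n_N such that for every i: λ_i² (1−ε)/(1−ελ_i²) · δ^{n_i/(n_1+⋯+n_N)} < 1. -/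
/-!
From `λ²(ε + (1-ε)δ^α) < 1` one reads off `ελ² < 1` and `c δ^α < 1` with
`c = λ²(1-ε)/(1-ελ²)`. The real shares `α_i` are then replaced by the rational shares
`n_i / Σ n_j` with `n_i = ⌈M α_i⌉`: since `M ≤ Σ n_j ≤ M + N`, these shares are at least
`M α_i / (M + N) → α_i`, and `δ^t` is decreasing and continuous in `t`, so the strict
inequalities survive for `M` large.
-/

open Filter Topology

lemma mul_sq_lt_one_of_sq_mul_add_rpow_lt_one {ε δ l a : ℝ} (hε : ε ≤ 1) (hδ : 0 ≤ δ)
    (h : l ^ 2 * (ε + (1 - ε) * δ ^ a) < 1) : ε * l ^ 2 < 1 := by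
  have : 0 ≤ l ^ 2 * ((1 - ε) * δ ^ a) :=
    mul_nonneg (sq_nonneg l) (mul_nonneg (sub_nonneg.2 hε) (Real.rpow_nonneg hδ a))
  linarith

lemma sq_mul_div_mul_rpow_lt_one {ε δ l a : ℝ} (h : l ^ 2 * (ε + (1 - ε) * δ ^ a) < 1)
    (hεl : ε * l ^ 2 < 1) : l ^ 2 * (1 - ε) / (1 - ε * l ^ 2) * δ ^ a < 1 := by
  rw [div_mul_eq_mul_div, div_lt_one (sub_pos.2 hεl)]
  linarith

lemma tendsto_natCast_mul_div_add_atTop (a k : ℝ) :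
    Tendsto (fun M : ℕ => (M : ℝ) * a / (M + k)) atTop (𝓝 a) := by
  have h := (tendsto_natCast_div_add_atTop k).const_mul a
  rw [mul_one] at h
  refine h.congr fun M => ?_
  ring

section NatCeilWeights

variable {ι : Type*} [Fintype ι] {α : ι → ℝ}

lemma le_sum_natCeil_mul (hsum : ∑ i, α i = 1) (M : ℝ) :
    M ≤ ∑ j, (⌈M * α j⌉₊ : ℝ) := by
  calc M = ∑ j, M * α j := by rw [← Finset.mul_sum, hsum, mul_one]
    _ ≤ ∑ j, (⌈M * α j⌉₊ : ℝ) := Finset.sum_le_sum fun j _ => Nat.le_ceil _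

lemma sum_natCeil_mul_le (hα : ∀ i, 0 ≤ α i) (hsum : ∑ i, α i = 1) {M : ℝ} (hM : 0 ≤ M) :
    ∑ j, (⌈M * α j⌉₊ : ℝ) ≤ M + Fintype.card ι := by
  calc ∑ j, (⌈M * α j⌉₊ : ℝ) ≤ ∑ j, (M * α j + 1) :=
        Finset.sum_le_sum fun j _ => (Nat.ceil_lt_add_one (mul_nonneg hM (hα j))).le
    _ = M + Fintype.card ι := by
        rw [Finset.sum_add_distrib, ← Finset.mul_sum, hsum, mul_one, Finset.sum_const,
          Finset.card_univ, nsmul_one]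

lemma mul_div_add_card_le_natCeil_div_sum (hα : ∀ i, 0 ≤ α i) (hsum : ∑ i, α i = 1) {M : ℝ}
    (hM : 0 < M) (i : ι) :
    M * α i / (M + Fintype.card ι) ≤ ⌈M * α i⌉₊ / ∑ j, (⌈M * α j⌉₊ : ℝ) := by
  have hS := le_sum_natCeil_mul hsum M
  calc M * α i / (M + Fintype.card ι) ≤ M * α i / ∑ j, (⌈M * α j⌉₊ : ℝ) :=
        div_le_div_of_nonneg_left (mul_nonneg hM.le (hα i)) (hM.trans_le hS)
          (sum_natCeil_mul_le hα hsum hM.le)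
    _ ≤ ⌈M * α i⌉₊ / ∑ j, (⌈M * α j⌉₊ : ℝ) :=
        div_le_div_of_nonneg_right (Nat.le_ceil _) (hM.le.trans hS)

theorem exists_pos_nat_mul_rpow_div_sum_lt_one {δ : ℝ} (hδ : δ ∈ Set.Ioo (0 : ℝ) 1)
    {c : ι → ℝ} (hc : ∀ i, 0 ≤ c i) (hαpos : ∀ i, 0 < α i) (hsum : ∑ i, α i = 1)
    (h : ∀ i, c i * δ ^ α i < 1) :
    ∃ n : ι → ℕ, (∀ i, 0 < n i) ∧ ∀ i, c i * δ ^ ((n i : ℝ) / ∑ j, (n j : ℝ)) < 1 := by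
  have hlim : ∀ i, Tendsto (fun M : ℕ => c i * δ ^ ((M : ℝ) * α i / (M + Fintype.card ι)))
      atTop (𝓝 (c i * δ ^ α i)) := fun i =>
    ((Real.continuousAt_const_rpow hδ.1.ne').tendsto.comp
      (tendsto_natCast_mul_div_add_atTop _ _)).const_mul (c i)
  obtain ⟨M, hlt, hM⟩ := ((eventually_all.2 fun i => (hlim i).eventually (gt_mem_nhds (h i))).and
    (eventually_gt_atTop 0)).exists
  have hM : (0 : ℝ) < M := Nat.cast_pos.2 hM
  refine ⟨fun i => ⌈M * α i⌉₊, fun i => Nat.ceil_pos.2 (mul_pos hM (hαpos i)), fun i => ?_⟩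
  calc _ ≤ c i * δ ^ ((M : ℝ) * α i / (M + Fintype.card ι)) :=
        mul_le_mul_of_nonneg_left (Real.rpow_le_rpow_of_exponent_ge hδ.1 hδ.2.le
          (mul_div_add_card_le_natCeil_div_sum (fun j => (hαpos j).le) hsum hM i)) (hc i)
    _ < 1 := hlt i

end NatCeilWeights

theorem stmt6_general (ε δ : ℝ) (hε : ε ∈ Set.Ioo (0 : ℝ) 1) (hδ : δ ∈ Set.Ioo (0 : ℝ) 1)
    {N : ℕ} (lam : Fin N → ℝ)
    (α : Fin N → ℝ) (hαpos : ∀ i, 0 < α i) (hαsum : ∑ i, α i = 1)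
    (hsuff : ∀ i, lam i ^ 2 * (ε + (1 - ε) * δ ^ (α i)) < 1) :
    (∀ i, ε * lam i ^ 2 < 1) ∧
    ∃ n : Fin N → ℕ, (∀ i, 0 < n i) ∧
      ∀ i, lam i ^ 2 * (1 - ε) / (1 - ε * lam i ^ 2) *
        δ ^ ((n i : ℝ) / ∑ j, (n j : ℝ)) < 1 := by
  have hεlam : ∀ i, ε * lam i ^ 2 < 1 := fun i =>
    mul_sq_lt_one_of_sq_mul_add_rpow_lt_one hε.2.le hδ.1.le (hsuff i)
  have hgain : ∀ i, 0 ≤ lam i ^ 2 * (1 - ε) / (1 - ε * lam i ^ 2) := fun i =>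
    div_nonneg (mul_nonneg (sq_nonneg _) (sub_nonneg.2 hε.2.le)) (sub_nonneg.2 (hεlam i).le)
  exact ⟨hεlam, exists_pos_nat_mul_rpow_div_sum_lt_one hδ hgain hαpos hαsum
    fun i => sq_mul_div_mul_rpow_lt_one (hsuff i) (hεlam i)⟩

/-- If there exist `α_i > 0` summing to 1 with `λ_i²(ε + (1-ε)δ^{α_i}) < 1` for all `i`,
then `ελ_i² < 1` for all `i` and there exist positive integers `n_i` with
`λ_i²(1-ε)/(1-ελ_i²) · δ^{n_i/(n_1+⋯+n_N)} < 1` for all `i`. -/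
theorem stmt6 (ε δ : ℝ) (hε : ε ∈ Set.Ioo (0 : ℝ) 1) (hδ : δ ∈ Set.Ioo (0 : ℝ) 1)
    {N : ℕ} (lam : Fin N → ℝ) (hlam : ∀ i, 1 ≤ lam i)
    (α : Fin N → ℝ) (hαpos : ∀ i, 0 < α i) (hαsum : ∑ i, α i = 1)
    (hsuff : ∀ i, lam i ^ 2 * (ε + (1 - ε) * δ ^ (α i)) < 1) :
    (∀ i, ε * lam i ^ 2 < 1) ∧
    ∃ n : Fin N → ℕ, (∀ i, 0 < n i) ∧
      ∀ i, lam i ^ 2 * (1 - ε) / (1 - ε * lam i ^ 2) *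
        δ ^ ((n i : ℝ) / ∑ j, (n j : ℝ)) < 1 :=
  stmt6_general ε δ hε hδ lam α hαpos hαsum hsuff
end

section
/- Let ε ∈ (0,1), δ ∈ (0,1), and let λ₁ > λ₂ > 1 be real numbers. Set φ = 2(ln λ₁ − ln λ₂)/ln δ (so φ < 0). If ln λ₁ + ln λ₂ < −ln((1−ε)√δ + ε), then the equation θφ − ln((1−ε) e^θ + ε) = 2 ln λ₁ admits a unique real solution θ, and this solution satisfies (1/2) ln δ < θ < 0. -/
/-! The left-hand side `F θ = θφ - ln((1-ε)e^θ + ε)` is continuous and strictly decreasing,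
since `φ < 0` and the mixture `(1-ε)e^θ + ε` increases with `θ`. At `θ = 0` it vanishes, which is
below `2 ln λ₁`; at `θ = ½ ln δ` we have `θφ = ln λ₁ - ln λ₂` and `e^θ = √δ`, so inequality (17)
says exactly that `F` exceeds `2 ln λ₁` there. The intermediate value theorem gives the root, and
strict monotonicity its uniqueness. -/

open Real Set

lemma mixture_exp_pos {ε : ℝ} (hε₀ : 0 ≤ ε) (hε₁ : ε < 1) (θ : ℝ) :
    0 < (1 - ε) * exp θ + ε := by
  have := mul_pos (sub_pos.mpr hε₁) (exp_pos θ)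
  linarith

lemma strictMono_log_mixture_exp {ε : ℝ} (hε₀ : 0 ≤ ε) (hε₁ : ε < 1) :
    StrictMono fun θ => log ((1 - ε) * exp θ + ε) := by
  intro a b hab
  refine log_lt_log (mixture_exp_pos hε₀ hε₁ a) ?_
  have := mul_lt_mul_of_pos_left (exp_lt_exp.mpr hab) (sub_pos.mpr hε₁)
  linarith

lemma continuous_log_mixture_exp {ε : ℝ} (hε₀ : 0 ≤ ε) (hε₁ : ε < 1) :
    Continuous fun θ => log ((1 - ε) * exp θ + ε) :=
  (by fun_prop : Continuous fun θ => (1 - ε) * exp θ + ε).log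
    fun θ => (mixture_exp_pos hε₀ hε₁ θ).ne'

lemma exp_half_mul_log {δ : ℝ} (hδ : 0 < δ) : exp (1 / 2 * log δ) = √δ := by
  rw [← exp_log (sqrt_pos.mpr hδ), log_sqrt hδ.le]
  ring_nf

lemma StrictAnti.exists_unique_eq_of_mem_Ioo {f : ℝ → ℝ} (hf : StrictAnti f)
    (hf_cont : Continuous f) {a b y : ℝ} (hab : a ≤ b) (hy : y ∈ Ioo (f b) (f a)) :
    ∃ x ∈ Ioo a b, f x = y ∧ ∀ x', f x' = y → x' = x := by
  obtain ⟨x, hx, hfx⟩ := intermediate_value_Ioo' hab hf_cont.continuousOn hy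
  exact ⟨x, hx, hfx, fun x' hx' => hf.injective (hx'.trans hfx.symm)⟩

/-- If `ln λ₁ + ln λ₂ < -ln((1-ε)√δ + ε)` with `λ₁ > λ₂ > 1`, `ε, δ ∈ (0,1)` and
`φ = 2(ln λ₁ - ln λ₂)/ln δ`, then `φ < 0` and the equation
`θφ - ln((1-ε)e^θ + ε) = 2 ln λ₁` has a unique real solution `θ`,
which satisfies `(1/2) ln δ < θ < 0`. -/
theorem stmt9 (ε δ lam₁ lam₂ : ℝ) (hε : ε ∈ Set.Ioo (0 : ℝ) 1) (hδ : δ ∈ Set.Ioo (0 : ℝ) 1)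
    (hlam₂ : 1 < lam₂) (hlam₁ : lam₂ < lam₁)
    (φ : ℝ) (hφ : φ = 2 * (Real.log lam₁ - Real.log lam₂) / Real.log δ)
    (h17 : Real.log lam₁ + Real.log lam₂ < -Real.log ((1 - ε) * Real.sqrt δ + ε)) :
    φ < 0 ∧
    ∃ θ : ℝ, (θ * φ - Real.log ((1 - ε) * Real.exp θ + ε) = 2 * Real.log lam₁) ∧
      (1 / 2) * Real.log δ < θ ∧ θ < 0 ∧
      ∀ θ' : ℝ, θ' * φ - Real.log ((1 - ε) * Real.exp θ' + ε) = 2 * Real.log lam₁ →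
        θ' = θ := by
  obtain ⟨hε₀, hε₁⟩ := hε
  have hlog_δ : log δ < 0 := log_neg hδ.1 hδ.2
  have hlog_lam₁ : 0 < log lam₁ := log_pos (hlam₂.trans hlam₁)
  have hlog_lt : log lam₂ < log lam₁ := log_lt_log (zero_lt_one.trans hlam₂) hlam₁
  have hφ_neg : φ < 0 := hφ ▸ div_neg_of_pos_of_neg (by linarith) hlog_δ
  set F : ℝ → ℝ := fun θ => θ * φ - log ((1 - ε) * exp θ + ε)
  have hF_anti : StrictAnti F := fun a b hab =>
    sub_lt_sub (mul_lt_mul_of_neg_right hab hφ_neg) (strictMono_log_mixture_exp hε₀.le hε₁ hab)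
  have hF_cont : Continuous F :=
    (continuous_id.mul continuous_const).sub (continuous_log_mixture_exp hε₀.le hε₁)
  have hF_zero : F 0 = 0 := by simp [F]
  have hF_half_log : F (1 / 2 * log δ) = log lam₁ - log lam₂ - log ((1 - ε) * √δ + ε) := by
    simp only [F, exp_half_mul_log hδ.1, hφ]
    field_simp [hlog_δ.ne]
  obtain ⟨θ, ⟨hθ_gt, hθ_lt⟩, hθ, hθ_unique⟩ :=
    hF_anti.exists_unique_eq_of_mem_Ioo hF_cont (a := 1 / 2 * log δ) (b := 0) (by linarith)
      (y := 2 * log lam₁) ⟨by linarith, by linarith⟩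
  exact ⟨hφ_neg, θ, hθ, hθ_gt, hθ_lt, hθ_unique⟩
end
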